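/- (Narrow-slab kernel lower bound.) Let n ≥ 1 and α ∈ (0,2). There exists a constant C > 0 depending only on n and α such that for every λ ∈ ℝ, every l > 0, and every x ∈ ℝⁿ with λ - l < x₁ < λ, one has ∫_{{y ∈ ℝⁿ : y₁ > λ}} |x - y|^{-(n+α)} dy ≥ C·l^{-α}. Equivalently, ∫_{Σ_λ} |x - y^λ|^{-(n+α)} dy ≥ C·l^{-α}. -/

import Mathlib

open MeasureTheory Metric Filter Set Topology

noncomputable section

abbrev Rn (n : ℕ) := EuclideanSpace ℝ (Fin n)

/-- Membership in the weighted space `L_α`. -/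
def MemLspace (n : ℕ) (α : ℝ) (u : Rn n → ℝ) : Prop :=
  Integrable (fun x : Rn n => |u x| / (1 + ‖x‖ ^ ((n : ℝ) + α)))

/-- `u` is `C^{1,1}` near `x`: differentiable with Lipschitz gradient in a ball around `x`. -/
def C11Near {n : ℕ} (u : Rn n → ℝ) (x : Rn n) : Prop :=
  ∃ ε > 0, ∃ K : NNReal,
    (∀ y ∈ ball x ε, DifferentiableAt ℝ u y) ∧
    LipschitzOnWith K (fderiv ℝ u) (ball x ε)

/-- The principal value integral defining `(-Δ)^{α/2} u (x)` (with normalization constant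
`Cna`) converges to `L`. -/
def HasFracLap (n : ℕ) (α Cna : ℝ) (u : Rn n → ℝ) (x : Rn n) (L : ℝ) : Prop :=
  Tendsto
    (fun ε : ℝ =>
      Cna * ∫ z in {z : Rn n | ε ≤ ‖x - z‖}, (u x - u z) / ‖x - z‖ ^ ((n : ℝ) + α))
    (𝓝[>] (0 : ℝ)) (𝓝 L)

/-- Reflection of `x` across the hyperplane `{x : x₁ = lam}`. -/
def reflPt {n : ℕ} (hn : 0 < n) (lam : ℝ) (x : Rn n) : Rn n :=
  WithLp.toLp 2 (Function.update x ⟨0, hn⟩ (2 * lam - x ⟨0, hn⟩))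

/-- The half space `Σ_λ = {x : x₁ < λ}`. -/
def SigmaLam {n : ℕ} (hn : 0 < n) (lam : ℝ) : Set (Rn n) :=
  {x : Rn n | x ⟨0, hn⟩ < lam}

/-! The half space `{y₁ > λ}` contains the ball of radius `l` about `x + 2l e₁`, which stays
at distance at least `λ - x₁ > 0` from `x` and on which `|x - y| ≤ 3l`; hence the integral is at
least `|B₁| lⁿ (3l)^{-(n+α)} = |B₁| 3^{-(n+α)} l^{-α}`. The reflected integral is the same
integral after the measure-preserving change of variables `y ↦ y^λ`, which maps `Σ_λ` onto
`{y₁ > λ}`. -/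

open Module

section KernelEstimates

variable {E : Type*} [NormedAddCommGroup E] [NormedSpace ℝ E] [FiniteDimensional ℝ E]
  [MeasurableSpace E] [BorelSpace E] (μ : Measure E) [μ.IsAddHaarMeasure]

lemma integrableOn_norm_sub_rpow_neg {s r : ℝ} (hs : (finrank ℝ E : ℝ) < s) (hr : 0 < r)
    (x : E) : IntegrableOn (fun y ↦ ‖x - y‖ ^ (-s)) {y | r ≤ ‖x - y‖} μ := by
  have hs0 : 0 < s := (Nat.cast_nonneg _).trans_lt hs
  set M := (1 + ‖x‖) / r + 1
  have hdom : ∀ y, r ≤ ‖x - y‖ → ‖x - y‖ ^ (-s) ≤ M ^ s * (1 + ‖y‖) ^ (-s) := by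
    intro y hy
    have hxy : 1 + ‖y‖ ≤ M * ‖x - y‖ := by
      have h₁ : ‖y‖ ≤ ‖x‖ + ‖x - y‖ := by
        simpa [norm_sub_rev] using norm_le_norm_add_norm_sub' y x
      have h₂ : 1 + ‖x‖ ≤ (1 + ‖x‖) / r * ‖x - y‖ := by
        rw [div_mul_eq_mul_div, le_div_iff₀ hr]
        exact mul_le_mul_of_nonneg_left hy (by positivity)
      linarith
    calc ‖x - y‖ ^ (-s) ≤ ((1 + ‖y‖) / M) ^ (-s) :=
          Real.rpow_le_rpow_of_nonpos (by positivity) ((div_le_iff₀' (by positivity)).2 hxy)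
            (by linarith)
      _ = M ^ s * (1 + ‖y‖) ^ (-s) := by
          rw [Real.div_rpow (by positivity) (by positivity),
            Real.rpow_neg (x := M) (by positivity), div_inv_eq_mul, mul_comm]
  refine Integrable.mono' ((integrable_one_add_norm hs).const_mul (M ^ s)).integrableOn
    (by fun_prop : Measurable fun y ↦ ‖x - y‖ ^ (-s)).aestronglyMeasurable ?_
  rw [ae_restrict_iff' (measurableSet_le measurable_const (by fun_prop))]
  refine ae_of_all _ fun y hy ↦ ?_
  rw [Real.norm_of_nonneg (by positivity)]
  exact hdom y hy

lemma le_setIntegral_norm_sub_rpow_neg {α l r : ℝ} (hα : 0 < α) (hl : 0 < l) (hr : 0 < r)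
    {S : Set E} {x p : E} (hxp : ‖x - p‖ ≤ 2 * l)
    (hpS : ball p l ⊆ S) (hSx : S ⊆ {y | r ≤ ‖x - y‖}) :
    μ.real (ball 0 1) * 3 ^ (-(finrank ℝ E + α)) * l ^ (-α) ≤
      ∫ y in S, ‖x - y‖ ^ (-(finrank ℝ E + α)) ∂μ := by
  set s := (finrank ℝ E : ℝ) + α with hs
  have hint : IntegrableOn (fun y ↦ ‖x - y‖ ^ (-s)) S μ :=
    (integrableOn_norm_sub_rpow_neg μ (by linarith) hr x).mono_set hSx
  have hnear : ∀ y ∈ ball p l, (3 * l) ^ (-s) ≤ ‖x - y‖ ^ (-s) := by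
    intro y hy
    refine Real.rpow_le_rpow_of_nonpos (hr.trans_le (hSx (hpS hy))) ?_
      (neg_nonpos.2 (by positivity))
    calc ‖x - y‖ ≤ ‖x - p‖ + ‖p - y‖ := norm_sub_le_norm_sub_add_norm_sub _ _ _
      _ ≤ 3 * l := by
        rw [← dist_eq_norm p, dist_comm]
        linarith [mem_ball.1 hy]
  have hexp : l ^ (-α) = l ^ (-s) * l ^ finrank ℝ E := by
    rw [← Real.rpow_natCast, ← Real.rpow_add hl, hs]
    ring_nf
  calc μ.real (ball 0 1) * 3 ^ (-s) * l ^ (-α) = (3 * l) ^ (-s) * μ.real (ball p l) := by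
        rw [measureReal_def, measureReal_def, Measure.addHaar_ball_of_pos μ p hl,
          ENNReal.toReal_mul, ENNReal.toReal_ofReal (by positivity), hexp,
          Real.mul_rpow (by norm_num) hl.le]
        ring
    _ ≤ ∫ y in ball p l, ‖x - y‖ ^ (-s) ∂μ :=
        setIntegral_ge_of_const_le_real measurableSet_ball measure_ball_lt_top.ne hnear
          (hint.mono_set hpS)
    _ ≤ ∫ y in S, ‖x - y‖ ^ (-s) ∂μ :=
        setIntegral_mono_set hint (ae_of_all _ fun _ ↦ by positivity) hpS.eventuallyLE

end KernelEstimates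

section HalfSpace

variable {ι : Type*} [Fintype ι]

lemma EuclideanSpace.abs_sub_apply_le_norm_sub (x y : EuclideanSpace ℝ ι) (i : ι) :
    |x i - y i| ≤ ‖x - y‖ := by
  simpa using PiLp.norm_apply_le (x - y) i

lemma EuclideanSpace.ball_add_single_subset [DecidableEq ι] (x : EuclideanSpace ℝ ι) (i : ι)
    (l : ℝ) : ball (x + EuclideanSpace.single i (2 * l)) l ⊆ {y | x i + l < y i} := by
  intro y hy
  have := (abs_sub_apply_le_norm_sub y (x + EuclideanSpace.single i (2 * l)) i).trans_lt
    (mem_ball_iff_norm.1 hy)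
  simp only [PiLp.add_apply, PiLp.single_apply, ↓reduceIte] at this
  show x i + l < y i
  linarith [(abs_lt.1 this).1]

lemma le_setIntegral_halfSpace_norm_sub_rpow_neg {α l lam : ℝ} (hα : 0 < α) (hl : 0 < l)
    {i : ι} {x : EuclideanSpace ℝ ι} (hxl : lam - l < x i) (hxlam : x i < lam) :
    volume.real (ball (0 : EuclideanSpace ℝ ι) 1) * 3 ^ (-(Fintype.card ι + α)) * l ^ (-α) ≤
      ∫ y in {y : EuclideanSpace ℝ ι | lam < y i}, ‖x - y‖ ^ (-(Fintype.card ι + α)) := by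
  classical
  have := le_setIntegral_norm_sub_rpow_neg volume hα hl (sub_pos.2 hxlam)
    (S := {y | lam < y i}) (x := x) (p := x + EuclideanSpace.single i (2 * l))
    (by simp [abs_of_pos hl])
    ((EuclideanSpace.ball_add_single_subset x i l).trans fun y hy ↦ by
      simp only [mem_ofPred_eq] at hy ⊢; linarith)
    fun y hy ↦ by
      have := EuclideanSpace.abs_sub_apply_le_norm_sub x y i
      simp only [mem_ofPred_eq] at hy ⊢
      linarith [le_abs_self (y i - x i), abs_sub_comm (x i) (y i)]
  simpa using this

end HalfSpace

section Reflection

variable {n : ℕ} (hn : 0 < n) (lam : ℝ)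

@[simp]
lemma reflPt_apply_self (y : Rn n) : reflPt hn lam y ⟨0, hn⟩ = 2 * lam - y ⟨0, hn⟩ := by
  simp [reflPt]

lemma reflPt_involutive : Function.Involutive (reflPt hn lam) := by
  intro y
  ext j
  by_cases hj : j = ⟨0, hn⟩ <;> simp [reflPt, hj]

lemma measurePreserving_reflPt : MeasurePreserving (reflPt hn lam) := by
  let f : Fin n → ℝ → ℝ := fun j ↦ if j = ⟨0, hn⟩ then (2 * lam - ·) else id
  have hf : MeasurePreserving (fun (a : Fin n → ℝ) j ↦ f j (a j)) :=
    volume_preserving_pi fun j ↦ by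
      by_cases hj : j = ⟨0, hn⟩
      · simpa [f, hj] using Measure.measurePreserving_sub_left volume (2 * lam)
      · simpa [f, hj] using MeasurePreserving.id volume
  convert (PiLp.volume_preserving_toLp (Fin n)).comp (hf.comp (PiLp.volume_preserving_ofLp _))
    using 1
  ext y j
  by_cases hj : j = ⟨0, hn⟩ <;> simp [f, reflPt, hj]

lemma setIntegral_sigmaLam_comp_reflPt (g : Rn n → ℝ) :
    ∫ y in SigmaLam hn lam, g (reflPt hn lam y) = ∫ y in {y : Rn n | lam < y ⟨0, hn⟩}, g y := by
  have hpre : reflPt hn lam ⁻¹' {y | lam < y ⟨0, hn⟩} = SigmaLam hn lam := by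
    ext y
    simp only [mem_preimage, mem_ofPred_eq, reflPt_apply_self, SigmaLam]
    constructor <;> intro <;> linarith
  rw [← hpre]
  exact (measurePreserving_reflPt hn lam).setIntegral_preimage_emb
    (MeasurableEquiv.ofInvolutive _ (reflPt_involutive hn lam)
      (measurePreserving_reflPt hn lam).measurable).measurableEmbedding _ _

end Reflection

theorem narrow_slab_kernel_lower_bound_general
    (n : ℕ) (hn : 0 < n) (α : ℝ) (hα0 : 0 < α) :
    ∃ C > (0 : ℝ), ∀ (lam l : ℝ), 0 < l → ∀ x : Rn n,
      lam - l < x ⟨0, hn⟩ → x ⟨0, hn⟩ < lam →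
      C * l ^ (-α) ≤
        (∫ y in {y : Rn n | lam < y ⟨0, hn⟩}, ‖x - y‖ ^ (-((n : ℝ) + α))) ∧
      C * l ^ (-α) ≤
        ∫ y in SigmaLam hn lam, ‖x - reflPt hn lam y‖ ^ (-((n : ℝ) + α)) := by
  have hball : 0 < volume.real (ball (0 : Rn n) 1) :=
    ENNReal.toReal_pos (measure_ball_pos volume _ one_pos).ne' measure_ball_lt_top.ne
  refine ⟨volume.real (ball (0 : Rn n) 1) * 3 ^ (-((n : ℝ) + α)), by positivity, ?_⟩
  intro lam l hl x hxl hxlam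
  have hhalf := le_setIntegral_halfSpace_norm_sub_rpow_neg hα0 hl hxl hxlam
  rw [Fintype.card_fin] at hhalf
  exact ⟨hhalf, by rwa [setIntegral_sigmaLam_comp_reflPt hn lam (fun y ↦ ‖x - y‖ ^ _)]⟩

/-- **Narrow-slab kernel lower bound.** -/
theorem narrow_slab_kernel_lower_bound
    (n : ℕ) (hn : 0 < n) (α : ℝ) (hα0 : 0 < α) (hα2 : α < 2) :
    ∃ C > (0 : ℝ), ∀ (lam l : ℝ), 0 < l → ∀ x : Rn n,
      lam - l < x ⟨0, hn⟩ → x ⟨0, hn⟩ < lam →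
      C * l ^ (-α) ≤
        (∫ y in {y : Rn n | lam < y ⟨0, hn⟩}, ‖x - y‖ ^ (-((n : ℝ) + α))) ∧
      C * l ^ (-α) ≤
        ∫ y in SigmaLam hn lam, ‖x - reflPt hn lam y‖ ^ (-((n : ℝ) + α)) :=
  narrow_slab_kernel_lower_bound_general n hn α hα0

end
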